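/- arXiv:1709.09355 — 8 statements merged into one kernel-verified Lean document; each statement's English description precedes it below -/
import Mathlib

section
/- Let T₀ be a subset of a nonempty set T, and let f : T₀ → T be an injective map such that f(t) ≠ t for every t ∈ T₀. Then there is a partition of T into three sets T₁, T₂, T₃ such that f(Tᵢ ∩ T₀) ∩ Tᵢ = ∅ for each i = 1, 2, 3. -/
/-- The Three Sets Lemma (Baker/Ellis): if `T₀ ⊆ T`, `T` nonempty, and `f` is injective on `T₀`,
maps `T₀` into `T` and has no fixed point on `T₀`, then `T` can be partitioned into three
pairwise disjoint sets `T₁, T₂, T₃` with `f(Tᵢ ∩ T₀) ∩ Tᵢ = ∅`. -/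
theorem three_sets_lemma {α : Type*} (T T₀ : Set α) (f : α → α)
    (hT : T.Nonempty) (h₀ : T₀ ⊆ T) (hinj : Set.InjOn f T₀)
    (hmaps : Set.MapsTo f T₀ T) (hfix : ∀ t ∈ T₀, f t ≠ t) :
    ∃ T₁ T₂ T₃ : Set α, T₁ ∪ T₂ ∪ T₃ = T ∧
      Disjoint T₁ T₂ ∧ Disjoint T₁ T₃ ∧ Disjoint T₂ T₃ ∧
      f '' (T₁ ∩ T₀) ∩ T₁ = ∅ ∧ f '' (T₂ ∩ T₀) ∩ T₂ = ∅ ∧ f '' (T₃ ∩ T₀) ∩ T₃ = ∅ := by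
  classical
  -- Partial colorings: sets of pairs (a, i) meaning a gets color i
  set S : Set (Set (α × Fin 3)) :=
    {C | (∀ p ∈ C, p.1 ∈ T) ∧
         (∀ a (i j : Fin 3), (a, i) ∈ C → (a, j) ∈ C → i = j) ∧
         (∀ a (i : Fin 3), (a, i) ∈ C → a ∈ T₀ → (f a, i) ∉ C)} with hS
  have hempty : (∅ : Set (α × Fin 3)) ∈ S := by
    refine ⟨?_, ?_, ?_⟩ <;> simp
  have hub : ∀ c ⊆ S, IsChain (· ⊆ ·) c → c.Nonempty → ∃ ub ∈ S, ∀ s ∈ c, s ⊆ ub := by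
    intro c hcS hchain hcne
    refine ⟨⋃₀ c, ⟨?_, ?_, ?_⟩, fun s hs => Set.subset_sUnion_of_mem hs⟩
    · rintro p ⟨s, hs, hp⟩
      exact (hcS hs).1 p hp
    · rintro a i j ⟨s, hs, hi⟩ ⟨s', hs', hj⟩
      rcases hchain.total hs hs' with h | h
      · exact (hcS hs').2.1 a i j (h hi) hj
      · exact (hcS hs).2.1 a i j hi (h hj)
    · rintro a i ⟨s, hs, hi⟩ ha ⟨s', hs', hfi⟩
      rcases hchain.total hs hs' with h | h
      · exact (hcS hs').2.2 a i (h hi) ha hfi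
      · exact (hcS hs).2.2 a i hi ha (h hfi)
  obtain ⟨C, -, hCmem, hCmax⟩ := zorn_subset_nonempty S hub ∅ hempty
  obtain ⟨hdom, hfun, hedge⟩ := hCmem
  -- every element of T is colored
  have hcover : ∀ t ∈ T, ∃ i : Fin 3, (t, i) ∈ C := by
    intro t ht
    by_contra hnone
    push_neg at hnone
    -- forbidden colors
    let i₁ : Fin 3 := if h : ∃ i, (f t, i) ∈ C then h.choose else 0
    let i₂ : Fin 3 := if h : ∃ i, ∃ s, (s, i) ∈ C ∧ s ∈ T₀ ∧ f s = t then h.choose else 0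
    have hpig : ∀ a b : Fin 3, ∃ i, i ≠ a ∧ i ≠ b := by decide
    obtain ⟨i, hi₁, hi₂⟩ := hpig i₁ i₂
    have hnew : insert (t, i) C ∈ S := by
      refine ⟨?_, ?_, ?_⟩
      · rintro p (rfl | hp)
        · exact ht
        · exact hdom p hp
      · rintro a j k (hj | hj) (hk | hk)
        · simp only [Prod.mk.injEq] at hj hk; rw [hj.2, hk.2]
        · simp only [Prod.mk.injEq] at hj; exact absurd (hj.1 ▸ hk) (hnone k)
        · simp only [Prod.mk.injEq] at hk; exact absurd (hk.1 ▸ hj) (hnone j)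
        · exact hfun a j k hj hk
      · rintro a j (hj | hj) ha (hfj | hfj)
        · simp only [Prod.mk.injEq] at hj hfj
          exact hfix a ha (hfj.1.trans hj.1.symm)
        · -- a = t, j = i, (f t, i) ∈ C : contradicts i ≠ i₁
          simp only [Prod.mk.injEq] at hj
          obtain ⟨rfl, rfl⟩ := hj
          have hex : ∃ k, (f a, k) ∈ C := ⟨j, hfj⟩
          have : j = i₁ := by
            have := hfun (f a) j hex.choose hfj hex.choose_spec
            simpa [i₁, dif_pos hex] using this
          exact hi₁ this
        · -- (a,j) ∈ C, f a = t : contradicts i ≠ i₂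
          simp only [Prod.mk.injEq] at hfj
          obtain ⟨hfa, rfl⟩ := hfj
          have hex : ∃ k, ∃ s, (s, k) ∈ C ∧ s ∈ T₀ ∧ f s = t := ⟨j, a, hj, ha, hfa⟩
          obtain ⟨s, hsC, hsT₀, hst⟩ := hex.choose_spec
          have hsa : s = a := hinj hsT₀ ha (hst.trans hfa.symm)
          have : j = i₂ := by
            have := hfun a j hex.choose hj (hsa ▸ hsC)
            simpa [i₂, dif_pos hex] using this
          exact hi₂ this
        · exact hedge a j hj ha hfj
    have := hCmax hnew (Set.subset_insert _ _)
    exact hnone i (this (Set.mem_insert _ _))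
  refine ⟨{a | (a, 0) ∈ C}, {a | (a, 1) ∈ C}, {a | (a, 2) ∈ C}, ?_, ?_, ?_, ?_, ?_, ?_, ?_⟩
  · apply Set.Subset.antisymm
    · rintro a ((h | h) | h) <;> exact hdom _ h
    · intro t ht
      obtain ⟨i, hi⟩ := hcover t ht
      fin_cases i
      · exact Or.inl (Or.inl hi)
      · exact Or.inl (Or.inr hi)
      · exact Or.inr hi
  · rw [Set.disjoint_left]; intro a h0 h1; exact absurd (hfun a 0 1 h0 h1) (by decide)
  · rw [Set.disjoint_left]; intro a h0 h1; exact absurd (hfun a 0 2 h0 h1) (by decide)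
  · rw [Set.disjoint_left]; intro a h0 h1; exact absurd (hfun a 1 2 h0 h1) (by decide)
  all_goals {
    ext x
    simp only [Set.mem_inter_iff, Set.mem_image, Set.mem_setOf_eq, Set.mem_empty_iff_false,
      iff_false, not_and]
    rintro ⟨a, ⟨haC, haT₀⟩, rfl⟩ hfa
    exact hedge a _ haC haT₀ hfa }
end

section
/- Let G be a topological group, U a symmetric neighbourhood of the identity, and T a right U-uniformly discrete subset of G (i.e., Ut ∩ Ut' = ∅ for all distinct t, t' ∈ T). If T is right translation-compact then T is right translation-finite. -/
/-!
An infinite relatively compact set `S` contains two distinct points `b, b'` with `b' * b⁻¹ ∈ U`: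
cover `closure S` by finitely many right translates `V * g` of a small neighbourhood `V` and use
the pigeonhole principle. A right `U`-uniformly discrete set `T` contains no such pair, so its
relatively compact subsets are finite.

Let `L` be infinite. If `L` is relatively compact, such a pair `b, b' ∈ L` gives
`b⁻¹T ∩ b'⁻¹T = ∅`, as `(b' * a) * (b * a)⁻¹ = b' * b⁻¹`. Otherwise translation-compactness
gives a finite `F ⊆ L`, necessarily nonempty, with `A = ⋂ b ∈ F, b⁻¹T` relatively compact; for
`b ∈ F` the relatively compact set `b • A` lies in `T`, hence is finite, and so is `A`.
-/

open Pointwise Set Filter Topology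

section

variable {G : Type*} [Group G]

def IsRightUniformlyDiscrete (U T : Set G) : Prop :=
  ∀ t ∈ T, ∀ t' ∈ T, t ≠ t' → Disjoint (U * ({t} : Set G)) (U * ({t'} : Set G))

theorem IsRightUniformlyDiscrete.mul_inv_notMem {U T : Set G} (hT : IsRightUniformlyDiscrete U T)
    (hU : (1 : G) ∈ U) {t t' : G} (ht : t ∈ T) (ht' : t' ∈ T) (hne : t ≠ t') :
    t' * t⁻¹ ∉ U := fun hmem =>
  disjoint_left.mp (hT t ht t' ht' hne) ⟨t' * t⁻¹, hmem, t, rfl, inv_mul_cancel_right t' t⟩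
    ⟨1, hU, t', rfl, one_mul t'⟩

theorem IsRightUniformlyDiscrete.inter_preimage_mul_left_eq_empty {U T : Set G}
    (hT : IsRightUniformlyDiscrete U T) (hU : (1 : G) ∈ U) {b b' : G} (hne : b ≠ b')
    (hmem : b' * b⁻¹ ∈ U) : (b * ·) ⁻¹' T ∩ (b' * ·) ⁻¹' T = ∅ := by
  refine eq_empty_of_forall_notMem fun a ⟨ha, ha'⟩ => ?_
  refine hT.mul_inv_notMem hU ha ha' ((mul_left_injective a).ne hne) ?_
  rwa [mul_inv_rev, mul_assoc, mul_inv_cancel_left]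

variable [TopologicalSpace G] [IsTopologicalGroup G]

theorem Set.Infinite.exists_ne_mul_inv_mem_of_isCompact_closure {U S : Set G} (hU : U ∈ 𝓝 1)
    (hS : S.Infinite) (hSc : IsCompact (closure S)) :
    ∃ b ∈ S, ∃ b' ∈ S, b ≠ b' ∧ b' * b⁻¹ ∈ U := by
  obtain ⟨V, hV, hVU⟩ := exists_nhds_split_inv hU
  -- Left translates of `V⁻¹` covering `(closure S)⁻¹` are right translates of `V` covering `S`.
  obtain ⟨t, hcover⟩ := compact_covered_by_mul_left_translates hSc.inv
    ⟨1, mem_interior_iff_mem_nhds.2 (by simpa using inv_mem_nhds_one G hV)⟩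
  have hS_cover : S ⊆ ⋃ g ∈ t, {b | b * g⁻¹ ∈ V} := fun b hb => by
    simpa using hcover (inv_mem_inv.2 (subset_closure hb))
  obtain ⟨g, -, hg⟩ : ∃ g ∈ t, (S ∩ {b | b * g⁻¹ ∈ V}).Infinite := by
    by_contra! h
    exact hS ((t.finite_toSet.biUnion h).subset fun b hb => by simpa [hb] using hS_cover hb)
  obtain ⟨b, ⟨hbS, hbV⟩, b', ⟨hb'S, hb'V⟩, hne⟩ := hg.nontrivial
  refine ⟨b, hbS, b', hb'S, hne, ?_⟩
  simpa [div_eq_mul_inv, mul_assoc] using hVU _ hb'V _ hbV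

theorem IsRightUniformlyDiscrete.finite_of_subset_of_isCompact_closure {U T S : Set G}
    (hT : IsRightUniformlyDiscrete U T) (hU : U ∈ 𝓝 1) (hST : S ⊆ T)
    (hSc : IsCompact (closure S)) : S.Finite := by
  refine not_infinite.mp fun hS => ?_
  obtain ⟨b, hb, b', hb', hne, hmem⟩ := hS.exists_ne_mul_inv_mem_of_isCompact_closure hU hSc
  exact hT.mul_inv_notMem (mem_of_mem_nhds hU) (hST hb) (hST hb') hne hmem

theorem IsRightUniformlyDiscrete.finite_of_subset_preimage_mul_left {U T A : Set G}
    (hT : IsRightUniformlyDiscrete U T) (hU : U ∈ 𝓝 1) {b : G} (hAT : A ⊆ (b * ·) ⁻¹' T)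
    (hAc : IsCompact (closure A)) : A.Finite := by
  refine Finite.of_smul_set (a := b) (hT.finite_of_subset_of_isCompact_closure hU ?_ ?_)
  · rintro _ ⟨a, ha, rfl⟩
    exact hAT ha
  · rw [closure_smul]
    exact hAc.smul b

end

theorem rtf_of_rtc_of_uniformly_discrete_general {G : Type*} [Group G] [TopologicalSpace G]
    [IsTopologicalGroup G]
    (U : Set G) (hU : U ∈ nhds (1 : G))
    (T : Set G)
    (hdisc : ∀ t ∈ T, ∀ t' ∈ T, t ≠ t' → Disjoint (U * ({t} : Set G)) (U * ({t'} : Set G)))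
    (htc : ∀ L : Set G, ¬ IsCompact (closure L) →
      ∃ F : Set G, F ⊆ L ∧ F.Finite ∧ IsCompact (closure (⋂ b ∈ F, (b * ·) ⁻¹' T))) :
    ∀ L : Set G, L.Infinite →
      ∃ F : Set G, F ⊆ L ∧ F.Finite ∧ (⋂ b ∈ F, (b * ·) ⁻¹' T).Finite := by
  have hT : IsRightUniformlyDiscrete U T := hdisc
  intro L hL
  by_cases hLc : IsCompact (closure L)
  · obtain ⟨b, hb, b', hb', hne, hmem⟩ := hL.exists_ne_mul_inv_mem_of_isCompact_closure hU hLc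
    refine ⟨{b, b'}, pair_subset hb hb', toFinite _, ?_⟩
    rw [biInter_pair, hT.inter_preimage_mul_left_eq_empty (mem_of_mem_nhds hU) hne hmem]
    exact finite_empty
  · obtain ⟨F, hFL, hF, hFc⟩ := htc L hLc
    obtain ⟨b, hb⟩ : F.Nonempty := by
      rw [nonempty_iff_ne_empty]
      rintro rfl
      rw [biInter_empty, closure_univ] at hFc
      exact hLc (hFc.of_isClosed_subset isClosed_closure (subset_univ _))
    exact ⟨F, hFL, hF, hT.finite_of_subset_preimage_mul_left hU (biInter_subset_of_mem hb) hFc⟩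

/-- For a right `U`-uniformly discrete subset `T` of a topological group `G` (with `U` a symmetric
neighbourhood of the identity), if `T` is right translation-compact then `T` is right
translation-finite. -/
theorem rtf_of_rtc_of_uniformly_discrete {G : Type*} [Group G] [TopologicalSpace G]
    [IsTopologicalGroup G]
    (U : Set G) (hU : U ∈ nhds (1 : G)) (hUsymm : U⁻¹ = U)
    (T : Set G)
    (hdisc : ∀ t ∈ T, ∀ t' ∈ T, t ≠ t' → Disjoint (U * ({t} : Set G)) (U * ({t'} : Set G)))
    (htc : ∀ L : Set G, ¬ IsCompact (closure L) →
      ∃ F : Set G, F ⊆ L ∧ F.Finite ∧ IsCompact (closure (⋂ b ∈ F, (b * ·) ⁻¹' T))) :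
    ∀ L : Set G, L.Infinite →
      ∃ F : Set G, F ⊆ L ∧ F.Finite ∧ (⋂ b ∈ F, (b * ·) ⁻¹' T).Finite :=
  rtf_of_rtc_of_uniformly_discrete_general U hU T hdisc htc
end

section
/- Let G be a topological group, U a symmetric neighbourhood of the identity, and T a right U-uniformly discrete subset of G. If L is a relatively compact subset of G and for every finite F ⊆ L the set ⋂_{b ∈ F} b⁻¹T is infinite, then for each s ∈ G the set L ∩ Us contains at most one point; consequently L is finite whenever L is covered by finitely many right translates of U. -/
open Pointwise

/-! If `a ≠ b` both lie in `L ∩ U * {s}`, the hypothesis on `L` gives `c` with `a * c, b * c ∈ T`;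
as `U` is symmetric, `s * c` lies in both `U * {a * c}` and `U * {b * c}`, contradicting the
uniform discreteness of `T`. -/

namespace Set

variable {G : Type*} [Group G] {U T : Set G}

theorem mem_mul_singleton_iff {x t : G} : x ∈ U * {t} ↔ x * t⁻¹ ∈ U := by
  rw [mul_singleton, image_mul_right, mem_preimage]

theorem mul_mem_mul_singleton_mul_of_mem (hUsymm : U⁻¹ = U) {a s : G} (ha : a ∈ U * {s})
    (c : G) : s * c ∈ U * {a * c} := by
  rw [mem_mul_singleton_iff] at ha ⊢
  have : (a * s⁻¹)⁻¹ ∈ U := hUsymm ▸ inv_mem_inv.2 ha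
  simpa [mul_assoc] using this

theorem subsingleton_mul_singleton_inter_preimage_mul_right (hUsymm : U⁻¹ = U)
    (hdisc : T.PairwiseDisjoint (fun t => U * {t})) (s c : G) :
    (U * {s} ∩ (· * c) ⁻¹' T).Subsingleton := by
  rintro a ⟨ha, hac⟩ b ⟨hb, hbc⟩
  by_contra hab
  exact (hdisc hac hbc fun h => hab (mul_right_cancel h)).ne_of_mem
    (mul_mem_mul_singleton_mul_of_mem hUsymm ha c)
    (mul_mem_mul_singleton_mul_of_mem hUsymm hb c) rfl

end Set

theorem uniformly_discrete_key_step_general {G : Type*} [Group G]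
    (U : Set G) (hUsymm : U⁻¹ = U)
    (T : Set G)
    (hdisc : ∀ t ∈ T, ∀ t' ∈ T, t ≠ t' → Disjoint (U * ({t} : Set G)) (U * ({t'} : Set G)))
    (L : Set G)
    (hLT : ∀ F : Set G, F ⊆ L → F.Finite → (⋂ b ∈ F, (b * ·) ⁻¹' T).Infinite) :
    (∀ s : G, (L ∩ (U * ({s} : Set G))).Subsingleton) ∧
      (∀ S : Finset G, L ⊆ ⋃ s ∈ S, U * ({s} : Set G) → L.Finite) := by
  have hL_inter_subsingleton : ∀ s : G, (L ∩ (U * ({s} : Set G))).Subsingleton := by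
    intro s a ha b hb
    obtain ⟨c, hc⟩ := (hLT {a, b} (Set.pair_subset ha.1 hb.1) (Set.toFinite _)).nonempty
    simp only [Set.mem_iInter, Set.mem_preimage] at hc
    exact Set.subsingleton_mul_singleton_inter_preimage_mul_right hUsymm hdisc s c
      ⟨ha.2, hc a (Or.inl rfl)⟩ ⟨hb.2, hc b (Or.inr rfl)⟩
  refine ⟨hL_inter_subsingleton, fun S hS => ?_⟩
  have hL : L ⊆ ⋃ s ∈ S, L ∩ (U * {s}) := by
    rw [← Set.inter_iUnion₂]
    exact Set.subset_inter subset_rfl hS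
  exact (S.finite_toSet.biUnion fun s _ => (hL_inter_subsingleton s).finite).subset hL

/-- Key step of Proposition 3.6: if `T` is right `U`-uniformly discrete, `L` is relatively
compact, and all finite intersections `⋂_{b ∈ F} b⁻¹T` (for finite `F ⊆ L`) are infinite, then
every set `L ∩ Us` has at most one point; consequently `L` is finite whenever it is covered by
finitely many right translates of `U`. -/
theorem uniformly_discrete_key_step {G : Type*} [Group G] [TopologicalSpace G]
    [IsTopologicalGroup G]
    (U : Set G) (hU : U ∈ nhds (1 : G)) (hUsymm : U⁻¹ = U)
    (T : Set G)
    (hdisc : ∀ t ∈ T, ∀ t' ∈ T, t ≠ t' → Disjoint (U * ({t} : Set G)) (U * ({t'} : Set G)))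
    (L : Set G) (hL : IsCompact (closure L))
    (hLT : ∀ F : Set G, F ⊆ L → F.Finite → (⋂ b ∈ F, (b * ·) ⁻¹' T).Infinite) :
    (∀ s : G, (L ∩ (U * ({s} : Set G))).Subsingleton) ∧
      (∀ S : Finset G, L ⊆ ⋃ s ∈ S, U * ({s} : Set G) → L.Finite) :=
  uniformly_discrete_key_step_general U hUsymm T hdisc L hLT
end

section
/- In a locally compact group G, the union of finitely many right translation-compact sets is right translation-compact. -/
open Pointwise

/-- A subset `T` of a topological group is right translation-compact if every
non-relatively-compact `L ⊆ G` contains a finite subset `F` with `⋂_{b ∈ F} b⁻¹T` relatively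
compact. -/
def RightTranslationCompact {G : Type*} [Group G] [TopologicalSpace G] (T : Set G) : Prop :=
  ∀ L : Set G, ¬ IsCompact (closure L) →
    ∃ F : Set G, F ⊆ L ∧ F.Finite ∧ IsCompact (closure (⋂ b ∈ F, (b * ·) ⁻¹' T))

/-!
Suppose `L` is not relatively compact but every `⋂_{b ∈ F} b⁻¹(⋃ᵢ Tᵢ)`, `F ⊆ L` finite, is not
relatively compact either. Distributing the intersection over the finite union, each finite `F`
admits a colouring `F → ι` with `⋂_{b ∈ F} b⁻¹T_{χ b}` still not relatively compact, and Rado's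
selection principle (compactness of `ι ^ L`) glues these into one colouring `χ : L → ι`. Some
colour class of `L` is not relatively compact, and translation-compactness of its colour `Tᵢ`,
applied to that class, contradicts the choice of `χ`.
-/

open Set

section RelativelyCompact

variable {X : Type*} [TopologicalSpace X]

lemma exists_not_isCompact_closure_of_iUnion {ι : Type*} [Finite ι] {A : ι → Set X}
    (h : ¬ IsCompact (closure (⋃ i, A i))) : ∃ i, ¬ IsCompact (closure (A i)) := by
  contrapose! h
  rw [closure_iUnion_of_finite]
  exact isCompact_iUnion h

lemma exists_not_isCompact_closure_iInter_of_iUnion {κ ι : Type*} [Finite κ] [Finite ι]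
    {A : κ → ι → Set X} (h : ¬ IsCompact (closure (⋂ k, ⋃ i, A k i))) :
    ∃ g : κ → ι, ¬ IsCompact (closure (⋂ k, A k (g k))) := by
  have distrib : (⋂ k, ⋃ i, A k i) = ⋃ g : κ → ι, ⋂ k, A k (g k) := iInf_iSup_eq
  exact exists_not_isCompact_closure_of_iUnion (distrib ▸ h)

lemma exists_forall_not_isCompact_closure_biInter {α ι : Type*} [Finite ι] (A : α → ι → Set X)
    (h : ∀ s : Set α, s.Finite → ¬ IsCompact (closure (⋂ a ∈ s, ⋃ i, A a i))) :
    ∃ χ : α → ι, ∀ s : Set α, s.Finite → ¬ IsCompact (closure (⋂ a ∈ s, A a (χ a))) := by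
  have local_choice (s : Set α) (hs : s.Finite) :
      ∃ g : s → ι, ¬ IsCompact (closure (⋂ a : s, A a (g a))) := by
    have := hs.to_subtype
    exact exists_not_isCompact_closure_iInter_of_iUnion
      (biInter_eq_iInter s (fun a _ => ⋃ i, A a i) ▸ h s hs)
  choose g hg using local_choice
  obtain ⟨χ, hχ⟩ := Set.Finite.rado_selection_subtype (β := fun _ => ι) g
  refine ⟨χ, fun s hs hcpt => ?_⟩
  obtain ⟨t, ht, hst, hχt⟩ := hχ s hs
  refine hg t ht (hcpt.of_isClosed_subset isClosed_closure (closure_mono ?_))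
  refine subset_iInter₂ fun a ha => ?_
  rw [hχt ⟨a, ha⟩]
  exact iInter_subset (fun b : t => A b (g t ht b)) (inclusion hst ⟨a, ha⟩)

end RelativelyCompact

theorem RightTranslationCompact.iUnion {G ι : Type*} [Group G] [TopologicalSpace G] [Finite ι]
    {T : ι → Set G} (h : ∀ i, RightTranslationCompact (T i)) :
    RightTranslationCompact (⋃ i, T i) := by
  intro L hL
  by_contra! hbad
  obtain ⟨χ, hχ⟩ := exists_forall_not_isCompact_closure_biInter
    (fun (a : L) i => ((a : G) * ·) ⁻¹' T i) fun s hs => by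
      simpa only [preimage_iUnion, biInter_image] using
        hbad ((↑) '' s) (by simp) (hs.image _)
  have colour_classes : L = ⋃ i, (↑) '' (χ ⁻¹' {i}) := by
    rw [← image_iUnion, ← preimage_iUnion, iUnion_of_singleton, preimage_univ, image_univ,
      Subtype.range_coe]
  obtain ⟨i, hi⟩ := exists_not_isCompact_closure_of_iUnion (colour_classes ▸ hL)
  obtain ⟨F, hFsub, hFfin, hFc⟩ := h i _ hi
  obtain ⟨u, hu, rfl⟩ := subset_image_iff.1 hFsub
  refine hχ u (hFfin.of_finite_image Subtype.val_injective.injOn) ?_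
  rw [biInter_image] at hFc
  rwa [iInter₂_congr fun a ha => by rw [show χ a = i from hu ha]]

theorem finite_union_right_translation_compact_general {G : Type*} [Group G] [TopologicalSpace G]
    (S : Finset (Set G)) (h : ∀ T ∈ S, RightTranslationCompact T) :
    RightTranslationCompact (⋃ T ∈ S, T) := by
  rw [← Finset.set_biUnion_coe, biUnion_eq_iUnion]
  exact RightTranslationCompact.iUnion fun T => h T T.2

/-- In a locally compact group, the union of finitely many right translation-compact sets is
right translation-compact. -/
theorem finite_union_right_translation_compact {G : Type*} [Group G] [TopologicalSpace G]
    [IsTopologicalGroup G] [LocallyCompactSpace G] [T2Space G]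
    (S : Finset (Set G)) (h : ∀ T ∈ S, RightTranslationCompact T) :
    RightTranslationCompact (⋃ T ∈ S, T) :=
  finite_union_right_translation_compact_general S h
end

section
/- Let G be a topological group, 𝒜 a unital left-translation-invariant C*-subalgebra of the bounded continuous functions on G, and T ⊆ G a right uniformly discrete set such that disjoint subsets of T have disjoint closures in the spectrum G^𝒜 of 𝒜 (via the evaluation map). Then every bounded function on T extends to a continuous function on the closure of T in G^𝒜; in particular T is an 𝒜-interpolation set. -/
open Pointwise

/-- An abstract model of the compactification `G^𝒜` associated to a unital
left-translation-invariant C*-subalgebra `A` of `CB(G)`: a compact Hausdorff space `X` together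
with the (dense-range) evaluation map `ε : G → X`, the natural left action of `G` on `X`
(`(ε(s)x)(f) = x(ₛf)`), and the Gelfand correspondence identifying `A` with `C(X)`. -/
structure GCompactification (G : Type*) [TopologicalSpace G] [Group G]
    (A : Set (G → ℂ)) (X : Type*) [TopologicalSpace X] [CompactSpace X] [T2Space X] where
  eps : G → X
  dense : DenseRange eps
  act : G → X → X
  act_eps : ∀ s t : G, act s (eps t) = eps (s * t)
  act_mul : ∀ s t : G, ∀ x : X, act (s * t) x = act s (act t x)
  act_cont : ∀ s : G, Continuous (act s)
  gelfand : (G → ℂ) → (X → ℂ)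
  gelfand_cont : ∀ f ∈ A, Continuous (gelfand f)
  gelfand_eps : ∀ f ∈ A, ∀ s : G, gelfand f (eps s) = f s
  mem_of_cont : ∀ φ : X → ℂ, Continuous φ → (fun s => φ (eps s)) ∈ A

/-- The semigroup compactification `G^𝒜` of an admissible subalgebra `A`: additionally `X` carries
an associative multiplication which is right topological, extends that of `G`, and restricts to
the action of `G`. -/
structure GSemigroupCompactification (G : Type*) [TopologicalSpace G] [Group G]
    (A : Set (G → ℂ)) (X : Type*) [TopologicalSpace X] [CompactSpace X] [T2Space X]
    extends GCompactification G A X where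
  mul : X → X → X
  mul_assoc : ∀ x y z : X, mul (mul x y) z = mul x (mul y z)
  right_cont : ∀ y : X, Continuous fun x => mul x y
  eps_act : ∀ (s : G) (x : X), mul (eps s) x = act s x

/-- `T` is an `𝒜`-set: for every open neighbourhood `U` of `e` there is an open neighbourhood `V`
of `e` with `closure V ⊆ U` such that for each `T₁ ⊆ T` some `h ∈ A` is `1` on `VT₁` and `0` off
`UT₁`. -/
def IsASet {G : Type*} [TopologicalSpace G] [Group G] (A : Set (G → ℂ)) (T : Set G) : Prop :=
  ∀ U : Set G, IsOpen U → (1 : G) ∈ U →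
    ∃ V : Set G, IsOpen V ∧ (1 : G) ∈ V ∧ closure V ⊆ U ∧
      ∀ T₁ ⊆ T, ∃ h ∈ A, (∀ x ∈ V * T₁, h x = 1) ∧ (∀ x ∉ U * T₁, h x = 0)

/-!
Let `f : α → X` map a set into a compact Hausdorff space so that disjoint subsets have disjoint
closures. The continuous extension `βα → X` of `f` to the Stone–Čech compactification (the
space of ultrafilters on `α`) sends an ultrafilter into the closure of the image of each of its
members; two distinct ultrafilters contain complementary sets, so the extension is injective and
hence a closed embedding of `βα` onto `closure (range f)`. A bounded function on `α` extends
continuously to `βα`, and by Tietze from there to all of `X`.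
-/

open Set Topology

section StoneCech

variable {α γ : Type*} [TopologicalSpace γ] [T2Space γ] [CompactSpace γ]

theorem Ultrafilter.extend_mem_closure_image (f : α → γ) {u : Ultrafilter α} {S : Set α}
    (hS : S ∈ u) : Ultrafilter.extend f u ∈ closure (f '' S) :=
  mem_closure_of_tendsto (ultrafilter_extend_eq_iff.mp rfl) <|
    Filter.mem_of_superset hS fun _ => mem_image_of_mem f

theorem Ultrafilter.extend_injective_of_disjoint_closure_image {f : α → γ}
    (hf : ∀ S₁ S₂ : Set α, Disjoint S₁ S₂ → Disjoint (closure (f '' S₁)) (closure (f '' S₂))) :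
    Function.Injective (Ultrafilter.extend f) := by
  intro u v huv
  refine Ultrafilter.eq_of_le fun S hSv => ?_
  by_contra hSu
  have hu := Ultrafilter.extend_mem_closure_image f (Ultrafilter.compl_mem_iff_notMem.mpr hSu)
  have hv := Ultrafilter.extend_mem_closure_image f hSv
  rw [huv] at hu
  exact disjoint_left.mp (hf S Sᶜ disjoint_compl_right) hv hu

theorem Ultrafilter.isClosedEmbedding_extend_of_disjoint_closure_image {f : α → γ}
    (hf : ∀ S₁ S₂ : Set α, Disjoint S₁ S₂ → Disjoint (closure (f '' S₁)) (closure (f '' S₂))) :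
    IsClosedEmbedding (Ultrafilter.extend f) :=
  (continuous_ultrafilter_extend f).isClosedEmbedding
    (Ultrafilter.extend_injective_of_disjoint_closure_image hf)

end StoneCech

theorem Ultrafilter.exists_continuous_extend_of_isBounded_range {α E : Type*}
    [MetricSpace E] [ProperSpace E] {g : α → E}
    (hg : Bornology.IsBounded (range g)) :
    ∃ ψ : C(Ultrafilter α, E), ∀ a, ψ (pure a) = g a := by
  have : CompactSpace (closure (range g)) := isCompact_iff_compactSpace.mp hg.isCompact_closure
  let g' : α → closure (range g) := fun a => ⟨g a, subset_closure (mem_range_self a)⟩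
  exact ⟨⟨Subtype.val ∘ Ultrafilter.extend g', continuous_subtype_val.comp
    (continuous_ultrafilter_extend g')⟩, fun a => by simp [ultrafilter_extend_pure, g']⟩

theorem exists_continuous_extension_of_disjoint_closure_image.{u, v, w}
    {α : Type u} {X : Type v} {E : Type w}
    [TopologicalSpace X] [CompactSpace X] [T2Space X]
    [MetricSpace E] [ProperSpace E] [TietzeExtension.{v} E] {f : α → X}
    (hf : ∀ S₁ S₂ : Set α, Disjoint S₁ S₂ → Disjoint (closure (f '' S₁)) (closure (f '' S₂)))
    {g : α → E} (hg : Bornology.IsBounded (range g)) :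
    ∃ φ : C(X, E), ∀ a, φ (f a) = g a := by
  obtain ⟨ψ, hψ⟩ := Ultrafilter.exists_continuous_extend_of_isBounded_range hg
  obtain ⟨φ, hφ⟩ := ψ.exists_extension'
    (Ultrafilter.isClosedEmbedding_extend_of_disjoint_closure_image hf)
  refine ⟨φ, fun a => ?_⟩
  rw [← hψ, ← ultrafilter_extend_pure f a]
  exact congrFun hφ (pure a)

theorem interpolation_of_disjoint_closures_general
    {G : Type*} [TopologicalSpace G] [Group G]
    (A : Set (G → ℂ)) {X : Type*} [TopologicalSpace X] [CompactSpace X] [T2Space X]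
    (C : GCompactification G A X)
    (T : Set G)
    (hsep : ∀ T₁ T₂ : Set G, T₁ ⊆ T → T₂ ⊆ T → Disjoint T₁ T₂ →
      Disjoint (closure (C.eps '' T₁)) (closure (C.eps '' T₂))) :
    ∀ g : G → ℂ, (∃ M : ℝ, ∀ t ∈ T, ‖g t‖ ≤ M) →
      (∃ φ : X → ℂ, Continuous φ ∧ ∀ t ∈ T, φ (C.eps t) = g t) ∧
      (∃ f ∈ A, ∀ t ∈ T, f t = g t) := by
  rintro g ⟨M, hM⟩
  have hsepT : ∀ S₁ S₂ : Set T, Disjoint S₁ S₂ →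
      Disjoint (closure ((C.eps ∘ (↑)) '' S₁)) (closure ((C.eps ∘ (↑)) '' S₂)) := by
    intro S₁ S₂ hS
    simp only [image_comp]
    exact hsep _ _ (Subtype.coe_image_subset T S₁) (Subtype.coe_image_subset T S₂)
      ((disjoint_image_iff Subtype.val_injective).mpr hS)
  have hbdd : Bornology.IsBounded (range fun t : T => g t) :=
    isBounded_iff_forall_norm_le.mpr ⟨M, by rintro _ ⟨t, rfl⟩; exact hM t t.2⟩
  obtain ⟨φ, hφ⟩ := exists_continuous_extension_of_disjoint_closure_image hsepT hbdd
  have hφT : ∀ t ∈ T, φ (C.eps t) = g t := fun t ht => hφ ⟨t, ht⟩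
  exact ⟨⟨φ, φ.continuous, hφT⟩, ⟨_, C.mem_of_cont φ φ.continuous, hφT⟩⟩

/-- Proposition 3.3: if `T` is right uniformly discrete and disjoint subsets of `T` have disjoint
closures in `G^𝒜`, then every bounded function on `T` extends to a continuous function on the
closure of `ε(T)` (equivalently, on all of `G^𝒜`); in particular `T` is an `𝒜`-interpolation
set. -/
theorem interpolation_of_disjoint_closures
    {G : Type*} [TopologicalSpace G] [Group G] [IsTopologicalGroup G]
    (A : Set (G → ℂ)) {X : Type*} [TopologicalSpace X] [CompactSpace X] [T2Space X]
    (C : GCompactification G A X)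
    (hone : (fun _ : G => (1 : ℂ)) ∈ A)
    (hlinv : ∀ f ∈ A, ∀ s : G, (fun t => f (s * t)) ∈ A)
    (T U : Set G) (hU : U ∈ nhds (1 : G))
    (hdisc : ∀ t ∈ T, ∀ t' ∈ T, t ≠ t' → Disjoint (U * ({t} : Set G)) (U * ({t'} : Set G)))
    (hsep : ∀ T₁ T₂ : Set G, T₁ ⊆ T → T₂ ⊆ T → Disjoint T₁ T₂ →
      Disjoint (closure (C.eps '' T₁)) (closure (C.eps '' T₂))) :
    ∀ g : G → ℂ, (∃ M : ℝ, ∀ t ∈ T, ‖g t‖ ≤ M) →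
      (∃ φ : X → ℂ, Continuous φ ∧ ∀ t ∈ T, φ (C.eps t) = g t) ∧
      (∃ f ∈ A, ∀ t ∈ T, f t = g t) :=
  interpolation_of_disjoint_closures_general A C T hsep
end

section
/- Let G be a locally compact group, 𝒜 a unital left-translation-invariant C*-subalgebra of LUC(G), and T ⊆ G an 𝒜-set. Then for every subset T₁ of T and every open set V in G, the set ε(V)·closure(ε(T₁)) is open in the spectrum G^𝒜. -/
open Pointwise

/-!
Fix `v ∈ V`, `x ∈ closure (ε '' T₁)` and a compact neighbourhood `K ⊆ v⁻¹V` of `1`. The `𝒜`-set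
property applied to `U = interior K` yields `h ∈ 𝒜` equal to `1` on `T₁` and vanishing off `U T₁`.
Its Gelfand transform `F` is continuous on `G^𝒜`, so `{F ≠ 0}` is an open neighbourhood of `x`;
by density it lies in `closure (ε '' (U T₁)) = closure (ε(U) · ε '' T₁)`, which is contained in the
compact set `ε(K) · closure (ε '' T₁)` because the action is jointly continuous. Translating by
`ε(v)` gives an open neighbourhood of `ε(v) x` inside `ε(V) · closure (ε '' T₁)`.
-/

open Topology

theorem DenseRange.support_subset_closure_image {G X M : Type*} [TopologicalSpace X]
    [TopologicalSpace M] [T1Space M] [Zero M] {e : G → X} (he : DenseRange e) {F : X → M}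
    (hF : Continuous F) {S : Set G} (hS : Function.support (F ∘ e) ⊆ S) :
    Function.support F ⊆ closure (e '' S) := by
  intro x hx
  by_contra hxS
  obtain ⟨s, hsF, hsS⟩ :=
    he.exists_mem_open (hF.isOpen_support.inter isClosed_closure.isOpen_compl) ⟨x, hx, hxS⟩
  exact hsS (subset_closure (Set.mem_image_of_mem e (hS hsF)))

namespace GCompactification

variable {G : Type*} [TopologicalSpace G] [Group G] {A : Set (G → ℂ)}
  {X : Type*} [TopologicalSpace X] [CompactSpace X] [T2Space X] (C : GCompactification G A X)

theorem act_one (x : X) : C.act 1 x = x := by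
  have h : C.act 1 ∘ C.eps = id ∘ C.eps := funext fun t => by simp [C.act_eps]
  exact congrFun (C.dense.equalizer (C.act_cont 1) continuous_id h) x

theorem act_inv_act (s : G) (x : X) : C.act s⁻¹ (C.act s x) = x := by
  rw [← C.act_mul, inv_mul_cancel, act_one]

theorem act_act_inv (s : G) (x : X) : C.act s (C.act s⁻¹ x) = x := by
  rw [← C.act_mul, mul_inv_cancel, act_one]

theorem isOpenMap_act (s : G) : IsOpenMap (C.act s) :=
  IsOpenMap.of_inverse (C.act_cont s⁻¹) (C.act_act_inv s) (C.act_inv_act s)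

theorem image_eps_mul (K S : Set G) : C.eps '' (K * S) = Set.image2 C.act K (C.eps '' S) := by
  rw [← Set.image2_mul, Set.image_image2, Set.image2_image_right]
  simp only [C.act_eps]

theorem isCompact_image2_act (hjc : Continuous fun p : G × X => C.act p.1 p.2) {K : Set G}
    (hK : IsCompact K) {S : Set X} (hS : IsCompact S) : IsCompact (Set.image2 C.act K S) := by
  rw [← Set.image_prod]
  exact (hK.prod hS).image hjc

theorem exists_isOpen_mem_subset_image2_act (hjc : Continuous fun p : G × X => C.act p.1 p.2)
    {T T₁ : Set G} (hT : IsASet A T) (hT₁ : T₁ ⊆ T) {K : Set G} (hK : IsCompact K)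
    (hK1 : K ∈ 𝓝 1) {x : X} (hx : x ∈ closure (C.eps '' T₁)) :
    ∃ O, IsOpen O ∧ x ∈ O ∧ O ⊆ Set.image2 C.act K (closure (C.eps '' T₁)) := by
  obtain ⟨V₀, -, hV₀, -, hsep⟩ :=
    hT (interior K) isOpen_interior (mem_interior_iff_mem_nhds.2 hK1)
  obtain ⟨h, hA, h_one, h_zero⟩ := hsep T₁ hT₁
  have hF : Continuous (C.gelfand h) := C.gelfand_cont h hA
  have hFx : C.gelfand h x = 1 := by
    refine closure_minimal ?_ (isClosed_eq hF continuous_const) hx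
    rintro _ ⟨t, ht, rfl⟩
    rw [Set.mem_ofPred_eq, C.gelfand_eps h hA]
    exact h_one t ⟨1, hV₀, t, ht, one_mul t⟩
  have h_support : Function.support (C.gelfand h ∘ C.eps) ⊆ interior K * T₁ := fun s hs => by
    by_contra hsK
    exact hs (by simp [C.gelfand_eps h hA, h_zero s hsK])
  refine ⟨Function.support (C.gelfand h), hF.isOpen_support, by simp [hFx], ?_⟩
  calc Function.support (C.gelfand h)
      ⊆ closure (C.eps '' (interior K * T₁)) :=
        C.dense.support_subset_closure_image hF h_support
    _ = closure (Set.image2 C.act (interior K) (C.eps '' T₁)) := by rw [image_eps_mul]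
    _ ⊆ Set.image2 C.act K (closure (C.eps '' T₁)) :=
      closure_minimal (Set.image2_subset interior_subset subset_closure)
        (C.isCompact_image2_act hjc hK isClosed_closure.isCompact).isClosed

end GCompactification

theorem A_set_open_neighbourhoods_general
    {G : Type*} [TopologicalSpace G] [Group G] [IsTopologicalGroup G]
    [LocallyCompactSpace G]
    (A : Set (G → ℂ)) {X : Type*} [TopologicalSpace X] [CompactSpace X] [T2Space X]
    (C : GCompactification G A X)
    (hjc : Continuous fun p : G × X => C.act p.1 p.2)
    (T : Set G) (hAset : IsASet A T) :
    ∀ T₁ ⊆ T, ∀ V : Set G, IsOpen V →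
      IsOpen (Set.image2 C.act V (closure (C.eps '' T₁))) := by
  intro T₁ hT₁ V hV
  refine isOpen_iff_forall_mem_open.2 ?_
  rintro _ ⟨v, hv, x, hx, rfl⟩
  have hV_nhds : (v * ·) ⁻¹' V ∈ 𝓝 1 :=
    (hV.preimage (continuous_const_mul v)).mem_nhds (by simpa using hv)
  obtain ⟨K, hK1, hKV, hK⟩ := local_compact_nhds hV_nhds
  obtain ⟨O, hO, hxO, hOK⟩ := C.exists_isOpen_mem_subset_image2_act hjc hAset hT₁ hK hK1 hx
  refine ⟨C.act v '' O, ?_, C.isOpenMap_act v O hO, Set.mem_image_of_mem _ hxO⟩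
  rintro _ ⟨y, hy, rfl⟩
  obtain ⟨k, hk, z, hz, rfl⟩ := hOK hy
  rw [← C.act_mul]
  exact Set.mem_image2_of_mem (hKV hk) hz

/-- Theorem 6.1: for `𝒜 ⊆ LUC(G)` (so that the action of `G` on `G^𝒜` is jointly continuous),
`T` is an `𝒜`-set if and only if `ε(V)·closure(ε(T₁))` is open in `G^𝒜` for every `T₁ ⊆ T` and
every open `V ⊆ G`; here we state the forward implication. -/
theorem A_set_open_neighbourhoods
    {G : Type*} [TopologicalSpace G] [Group G] [IsTopologicalGroup G]
    [LocallyCompactSpace G] [T2Space G]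
    (A : Set (G → ℂ)) {X : Type*} [TopologicalSpace X] [CompactSpace X] [T2Space X]
    (C : GCompactification G A X)
    (hone : (fun _ : G => (1 : ℂ)) ∈ A)
    (hlinv : ∀ f ∈ A, ∀ s : G, (fun t => f (s * t)) ∈ A)
    (hjc : Continuous fun p : G × X => C.act p.1 p.2)
    (T : Set G) (hAset : IsASet A T) :
    ∀ T₁ ⊆ T, ∀ V : Set G, IsOpen V →
      IsOpen (Set.image2 C.act V (closure (C.eps '' T₁))) :=
  A_set_open_neighbourhoods_general A C hjc T hAset
end

section
/- Let G be a topological group, 𝒜 an amenable admissible subalgebra of CB(G), and μ a left invariant mean on 𝒜, regarded as a regular Borel probability measure on G^𝒜. Then the support of μ is a closed left ideal of G^𝒜: ε(s)·x ∈ supp(μ) for every s ∈ G and x ∈ supp(μ). -/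
open Pointwise

/-! Through the Gelfand correspondence, invariance of the mean under left translates `ₛf` becomes
`∫ φ (ε(s) x) dμ = ∫ φ dμ` for every continuous `φ` on `G^𝒜`. Urysohn's lemma and inner
regularity turn this into `μ ((ε(s) ·)⁻¹' O) = 0` for every null open `O`, so `x ↦ ε(s) x` maps
the (closed) support into itself; since `ε(G)` is dense and `y ↦ y x` is continuous, so does
`x ↦ y x` for every `y ∈ G^𝒜`. -/

open Set MeasureTheory

namespace MeasureTheory.Measure

variable {X : Type*} [TopologicalSpace X] [MeasurableSpace X]

theorem setOf_forall_isOpen_measure_ne_zero (μ : Measure X) :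
    {x : X | ∀ O : Set X, IsOpen O → x ∈ O → μ O ≠ 0} = μ.support := by
  simp only [support_eq_forall_isOpen, pos_iff_ne_zero]
  grind

variable [T2Space X] [LocallyCompactSpace X] [OpensMeasurableSpace X]
  {μ : Measure X} [IsFiniteMeasure μ] [μ.Regular] {T : X → X}

/-- Otherwise `T⁻¹' O` contains a compact `K` of positive measure, and an Urysohn function equal
to `1` on `T '' K` and `0` off `O` has integral `0` while its composition with `T` has integral at
least `μ K`. -/
theorem measure_preimage_eq_zero_of_integral_comp_eq (hT : Continuous T)
    (hint : ∀ φ : C(X, ℝ), ∫ x, φ (T x) ∂μ = ∫ x, φ x ∂μ) {O : Set X} (hO : IsOpen O)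
    (hμO : μ O = 0) : μ (T ⁻¹' O) = 0 := by
  by_contra hpos
  obtain ⟨K, hKO, hK, hμK⟩ :=
    Regular.innerRegular (hO.preimage hT) 0 (pos_iff_ne_zero.2 hpos)
  obtain ⟨φ, hφK, hφO, -, hφ01⟩ := exists_continuous_one_zero_of_isCompact (hK.image hT)
    hO.isClosed_compl (disjoint_compl_right_iff_subset.2 (image_subset_iff.2 hKO))
  have hφ_null : ∫ x, φ x ∂μ = 0 := by
    refine integral_eq_zero_of_ae (measure_mono_null (fun x hx => ?_) hμO)
    by_contra hxO
    exact hx (hφO hxO)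
  have hφT_int : Integrable (fun x => φ (T x)) μ :=
    .of_bound (φ.continuous.comp hT).aestronglyMeasurable 1
      (ae_of_all _ fun x => by
        rw [Real.norm_eq_abs, abs_of_nonneg (hφ01 (T x)).1]; exact (hφ01 (T x)).2)
  have hφT_ge : μ.real K ≤ ∫ x, φ (T x) ∂μ := calc
    μ.real K = ∫ x in K, φ (T x) ∂μ := by
      rw [setIntegral_congr_fun hK.measurableSet fun x hx => hφK (mem_image_of_mem T hx)]
      simp
    _ ≤ ∫ x, φ (T x) ∂μ :=
      setIntegral_le_integral hφT_int (ae_of_all _ fun x => (hφ01 (T x)).1)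
  have : 0 < μ.real K := ENNReal.toReal_pos hμK.ne' (measure_ne_top μ K)
  linarith [hint φ]

theorem mapsTo_support_of_integral_comp_eq (hT : Continuous T)
    (hint : ∀ φ : C(X, ℝ), ∫ x, φ (T x) ∂μ = ∫ x, φ x ∂μ) : MapsTo T μ.support μ.support := by
  intro x hx
  rw [support_eq_forall_isOpen] at hx ⊢
  intro O hxO hO
  rw [pos_iff_ne_zero]
  exact fun hμO => (hx _ hxO (hO.preimage hT)).ne'
    (measure_preimage_eq_zero_of_integral_comp_eq hT hint hO hμO)

end MeasureTheory.Measure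

namespace GCompactification

variable {G : Type*} [TopologicalSpace G] [Group G] {A : Set (G → ℂ)} {X : Type*}
  [TopologicalSpace X] [CompactSpace X] [T2Space X] (C : GCompactification G A X)

theorem gelfand_comp_eps {φ : X → ℂ} (hφ : Continuous φ) :
    C.gelfand (fun s => φ (C.eps s)) = φ :=
  C.dense.equalizer (C.gelfand_cont _ (C.mem_of_cont φ hφ)) hφ
    (funext fun s => C.gelfand_eps _ (C.mem_of_cont φ hφ) s)

theorem gelfand_leftTranslate {f : G → ℂ} (hf : f ∈ A) {s : G}
    (hsf : (fun t => f (s * t)) ∈ A) :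
    C.gelfand (fun t => f (s * t)) = fun x => C.gelfand f (C.act s x) :=
  C.dense.equalizer (C.gelfand_cont _ hsf) ((C.gelfand_cont f hf).comp (C.act_cont s))
    (funext fun t => by simp [C.gelfand_eps _ hsf, C.act_eps, C.gelfand_eps _ hf])

theorem integral_comp_act [MeasurableSpace X] {μ : Measure X}
    (hlinv : ∀ f ∈ A, ∀ s : G, (fun t => f (s * t)) ∈ A)
    (hinvariant : ∀ f ∈ A, ∀ s : G,
      ∫ x, C.gelfand (fun t => f (s * t)) x ∂μ = ∫ x, C.gelfand f x ∂μ)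
    (φ : C(X, ℝ)) (s : G) : ∫ x, φ (C.act s x) ∂μ = ∫ x, φ x ∂μ := by
  have hφ : Continuous fun x => (φ x : ℂ) := Complex.continuous_ofReal.comp φ.continuous
  have hmem := C.mem_of_cont _ hφ
  have h := hinvariant _ hmem s
  rw [C.gelfand_leftTranslate hmem (hlinv _ hmem s), C.gelfand_comp_eps hφ] at h
  simpa only [integral_complex_ofReal, Complex.ofReal_inj] using h

end GCompactification

theorem support_of_invariant_mean_left_ideal_general
    {G : Type*} [TopologicalSpace G] [Group G]
    (A : Set (G → ℂ)) {X : Type*} [TopologicalSpace X] [CompactSpace X] [T2Space X]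
    [MeasurableSpace X] [BorelSpace X]
    (C : GSemigroupCompactification G A X)
    (hlinv : ∀ f ∈ A, ∀ s : G, (fun t => f (s * t)) ∈ A)
    (μ : Measure X) [IsProbabilityMeasure μ] [μ.Regular]
    (hinvariant : ∀ f ∈ A, ∀ s : G,
      ∫ x, C.gelfand (fun t => f (s * t)) x ∂μ = ∫ x, C.gelfand f x ∂μ) :
    IsClosed {x : X | ∀ O : Set X, IsOpen O → x ∈ O → μ O ≠ 0} ∧
    (∀ s : G, ∀ x ∈ {x : X | ∀ O : Set X, IsOpen O → x ∈ O → μ O ≠ 0},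
      C.act s x ∈ {x : X | ∀ O : Set X, IsOpen O → x ∈ O → μ O ≠ 0}) ∧
    (∀ y : X, ∀ x ∈ {x : X | ∀ O : Set X, IsOpen O → x ∈ O → μ O ≠ 0},
      C.mul y x ∈ {x : X | ∀ O : Set X, IsOpen O → x ∈ O → μ O ≠ 0}) := by
  rw [Measure.setOf_forall_isOpen_measure_ne_zero]
  have hact : ∀ s : G, MapsTo (C.act s) μ.support μ.support := fun s =>
    Measure.mapsTo_support_of_integral_comp_eq (C.act_cont s)
      (C.integral_comp_act hlinv hinvariant · s)
  refine ⟨Measure.isClosed_support, hact, fun y x hx => ?_⟩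
  refine C.dense.induction_on (p := fun z => C.mul z x ∈ μ.support) y
    (Measure.isClosed_support.preimage (C.right_cont x)) fun s => ?_
  rw [C.eps_act]
  exact hact s hx

/-- Theorem 8.2, first part: the support of a left invariant mean `μ` on an admissible subalgebra
`𝒜` (regarded as a regular Borel probability measure on `G^𝒜`) is a closed left ideal of `G^𝒜`;
in particular `ε(s)·x ∈ supp(μ)` for every `s ∈ G` and `x ∈ supp(μ)`. -/
theorem support_of_invariant_mean_left_ideal
    {G : Type*} [TopologicalSpace G] [Group G] [IsTopologicalGroup G]
    (A : Set (G → ℂ)) {X : Type*} [TopologicalSpace X] [CompactSpace X] [T2Space X]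
    [MeasurableSpace X] [BorelSpace X]
    (C : GSemigroupCompactification G A X)
    (hone : (fun _ : G => (1 : ℂ)) ∈ A)
    (hlinv : ∀ f ∈ A, ∀ s : G, (fun t => f (s * t)) ∈ A)
    (hintro : ∀ f ∈ A, ∀ x : X, (fun s => C.gelfand f (C.act s x)) ∈ A)
    (μ : Measure X) [IsProbabilityMeasure μ] [μ.Regular]
    (hinvariant : ∀ f ∈ A, ∀ s : G,
      ∫ x, C.gelfand (fun t => f (s * t)) x ∂μ = ∫ x, C.gelfand f x ∂μ) :
    IsClosed {x : X | ∀ O : Set X, IsOpen O → x ∈ O → μ O ≠ 0} ∧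
    (∀ s : G, ∀ x ∈ {x : X | ∀ O : Set X, IsOpen O → x ∈ O → μ O ≠ 0},
      C.act s x ∈ {x : X | ∀ O : Set X, IsOpen O → x ∈ O → μ O ≠ 0}) ∧
    (∀ y : X, ∀ x ∈ {x : X | ∀ O : Set X, IsOpen O → x ∈ O → μ O ≠ 0},
      C.mul y x ∈ {x : X | ∀ O : Set X, IsOpen O → x ∈ O → μ O ≠ 0}) :=
  support_of_invariant_mean_left_ideal_general A C hlinv μ hinvariant
end

section
/- Let G be a metrizable locally compact group, 𝒜 a C*-subalgebra of LUC(G), and T ⊆ G an 𝒜-interpolation set. Then for every ε > 0 there is a neighbourhood V of the identity such that for every function f : T → 𝕋 (the unit circle) there exists φ ∈ 𝒜 with |φ(ut) − f(t)| < ε for every t ∈ T and every u ∈ V. -/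
/-!
Put `g ∈ approxSubmodule 𝒜 T W` if for every `δ > 0` some `φ ∈ 𝒜` has `‖φ (u * t) - g t‖ ≤ δ` for
all `t ∈ T`, `u ∈ W`. This is a vector space, stable under uniform limits on `T`, so it contains
every bounded function as soon as it contains every indicator `1_S`. For an indicator, one `φ` with
error `1/8` suffices: the smoothstep `3φ² - 2φ³` squares the error near the values `0` and `1`.
Interpolation and left uniform continuity provide such a `φ` on some member `V n` of a countable
neighbourhood base. Shrinking every `V n` to `V n ∩ U` with `1 ∈ approxSubmodule 𝒜 T U`, the sets `S`
with `1_S ∈ approxSubmodule 𝒜 T (V n ∩ U)` form an algebra of sets, increasing with `n` and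
exhausting all subsets of `G`.

Such a sequence of algebras of sets reaches the whole power set at a finite stage (Koppelberg). The
sets all of whose subsets lie in one stage form an ideal. If it is proper, either there are
infinitely many disjoint sets outside it, and the union of non-captured subsets of them lies in some
stage, which is absurd; or some set outside it is an atom modulo the ideal, and a decreasing
sequence of subsets escaping ever higher stages, split by the parity of the index at which points
leave it, yields a contradiction.
-/

open Set Filter Topology MeasureTheory Function

section SetAlgebraChain

variable {α : Type*} (ℬ : ℕ → Set (Set α))

def IsCaptured (W : Set α) : Prop := ∃ k, 𝒫 W ⊆ ℬ k

variable {ℬ}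

theorem IsCaptured.mono {W W' : Set α} (h : W' ⊆ W) (hW : IsCaptured ℬ W) : IsCaptured ℬ W' :=
  let ⟨k, hk⟩ := hW
  ⟨k, fun _ hC => hk (hC.trans h)⟩

theorem Antitone.pairwise_disjoint_sdiff_succ {B : ℕ → Set α} (hB : Antitone B) :
    Pairwise (Disjoint on fun k => B k \ B (k + 1)) := by
  intro i j hij
  wlog h : i < j generalizing i j
  · exact (this hij.symm (hij.lt_or_gt.resolve_left h)).symm
  exact Set.disjoint_left.mpr fun x hi hj => hi.2 (hB (Nat.succ_le_of_lt h) hj.1)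

theorem exists_pairwise_disjoint_not_isCaptured {R : Set α} (hR : ¬ IsCaptured ℬ R)
    (hsplit : ∀ W, ¬ IsCaptured ℬ W → ∃ X ⊆ W, ¬ IsCaptured ℬ X ∧ ¬ IsCaptured ℬ (W \ X)) :
    ∃ Q : ℕ → Set α, Pairwise (Disjoint on Q) ∧ ∀ i, ¬ IsCaptured ℬ (Q i) := by
  choose X hXW hX hWX using hsplit
  let S : ℕ → {W // ¬ IsCaptured ℬ W} := fun k =>
    Nat.rec ⟨R, hR⟩ (fun _ W => ⟨W.1 \ X W.1 W.2, hWX W.1 W.2⟩) k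
  have hS : Antitone fun k => (S k).1 := antitone_nat_of_succ_le fun _ => sdiff_subset
  refine ⟨fun k => (S k).1 \ (S (k + 1)).1, hS.pairwise_disjoint_sdiff_succ, fun k => ?_⟩
  simpa only [S, sdiff_sdiff_cancel_left (hXW _ _)] using hX _ (S k).2

variable (halg : ∀ n, IsSetAlgebra (ℬ n)) (hmono : Monotone ℬ) (hcover : ∀ s, ∃ n, s ∈ ℬ n)
include halg hmono

theorem IsCaptured.union {X Y : Set α} (hX : IsCaptured ℬ X) (hY : IsCaptured ℬ Y) :
    IsCaptured ℬ (X ∪ Y) := by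
  obtain ⟨k, hk⟩ := hX
  obtain ⟨l, hl⟩ := hY
  refine ⟨max k l, fun C hC => ?_⟩
  have hCX : C ∩ X ∈ ℬ (max k l) := hmono (le_max_left k l) (hk inter_subset_right)
  have hCY : C \ X ∈ ℬ (max k l) :=
    hmono (le_max_right k l) (hl fun x hx => (hC hx.1).resolve_left hx.2)
  simpa only [inter_union_sdiff] using (halg _).union_mem hCX hCY

include hcover

theorem exists_subset_not_isCaptured_not_mem {W : Set α} (hW : ¬ IsCaptured ℬ W) (k : ℕ) :
    ∃ E ⊆ W, ¬ IsCaptured ℬ E ∧ E ∉ ℬ k := by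
  obtain ⟨m, hm⟩ := hcover W
  obtain ⟨C, hCW, hC⟩ : ∃ C ⊆ W, C ∉ ℬ (max k m) := by
    simpa [IsCaptured, Set.subset_def] using fun h : 𝒫 W ⊆ ℬ (max k m) => hW ⟨_, h⟩
  by_cases hCcap : IsCaptured ℬ C
  · refine ⟨W \ C, sdiff_subset, fun hcap => hW ?_, fun hmem => hC ?_⟩
    · exact (hCcap.union halg hmono hcap).mono (by simp)
    · rw [← sdiff_sdiff_cancel_left hCW]
      exact (halg _).sdiff_mem (hmono (le_max_right k m) hm) (hmono (le_max_left k m) hmem)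
  · exact ⟨C, hCW, hCcap, fun hmem => hC (hmono (le_max_left k m) hmem)⟩

theorem not_exists_pairwise_disjoint_not_isCaptured :
    ¬ ∃ Q : ℕ → Set α, Pairwise (Disjoint on Q) ∧ ∀ i, ¬ IsCaptured ℬ (Q i) := by
  rintro ⟨Q, hQ, hQcap⟩
  choose c hc using fun i => hcover (Q i)
  choose C hCQ _ hC using fun i =>
    exists_subset_not_isCaptured_not_mem halg hmono hcover (hQcap i) (max i (c i))
  obtain ⟨N, hN⟩ := hcover (⋃ i, C i)
  have htrace : (⋃ i, C i) ∩ Q N = C N := by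
    refine Subset.antisymm (fun x ⟨hx, hxN⟩ => ?_) (subset_inter (subset_iUnion C N) (hCQ N))
    obtain ⟨i, hxi⟩ := mem_iUnion.mp hx
    obtain rfl : i = N := by_contra fun hiN =>
      Set.disjoint_left.mp (hQ hiN) (hCQ i hxi) hxN
    exact hxi
  apply hC N
  rw [← htrace]
  exact (halg _).inter_mem (hmono (le_max_left N (c N)) hN) (hmono (le_max_right N (c N)) (hc N))

theorem exists_antitone_escaping {R : Set α} (hR : ¬ IsCaptured ℬ R) :
    ∃ B : ℕ → Set α, B 0 = R ∧ Antitone B ∧ ∀ k, ∃ n ≥ k, B k ∈ ℬ n ∧ B (k + 1) ∉ ℬ n := by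
  choose E hEW hE hEk using fun (W : {W // ¬ IsCaptured ℬ W}) (k : ℕ) =>
    exists_subset_not_isCaptured_not_mem halg hmono hcover W.2 k
  choose c hc using hcover
  let B : ℕ → {W // ¬ IsCaptured ℬ W} := fun k =>
    Nat.rec ⟨R, hR⟩ (fun k W => ⟨E W (c W.1 + k), hE W _⟩) k
  exact ⟨fun k => (B k).1, rfl, antitone_nat_of_succ_le fun k => hEW _ _,
    fun k => ⟨c (B k).1 + k, le_add_self, hmono le_self_add (hc _), hEk _ _⟩⟩

theorem not_exists_not_isCaptured_atom :
    ¬ ∃ R : Set α, ¬ IsCaptured ℬ R ∧ ∀ X ⊆ R, ¬ IsCaptured ℬ X → IsCaptured ℬ (R \ X) := by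
  rintro ⟨R, hR, hatom⟩
  obtain ⟨B, rfl, hB, hesc⟩ := exists_antitone_escaping halg hmono hcover hR
  let X (p : ℕ → Prop) : Set α := {x ∈ B 0 | ∀ j, x ∈ B j \ B (j + 1) → p j}
  -- At an index `m` with `¬ p m`, no point of `X p` leaves `B`, so `B (m + 1)` is `B m` on `X p`
  -- and lies in the captured set `B 0 \ X p` off it.
  have key (p : ℕ → Prop) (hp : ∀ K, ∃ m ≥ K, ¬ p m) : IsCaptured ℬ (X p) := by
    by_contra hXp
    obtain ⟨b, hb⟩ := hatom (X p) (sep_subset _ _) hXp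
    obtain ⟨c, hc⟩ := hcover (X p)
    obtain ⟨m, hm, hpm⟩ := hp (max b c)
    obtain ⟨n, hn, hBm, hBm1⟩ := hesc m
    have hsplit : B (m + 1) = (B m ∩ X p) ∪ (B (m + 1) \ X p) := by
      refine Subset.antisymm (fun x hx => ?_) (union_subset (fun x hx => ?_) sdiff_subset)
      · by_cases hxX : x ∈ X p
        · exact Or.inl ⟨hB (Nat.le_succ m) hx, hxX⟩
        · exact Or.inr ⟨hx, hxX⟩
      · by_contra hx'
        exact hpm (hx.2.2 m ⟨hx.1, hx'⟩)
    apply hBm1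
    rw [hsplit]
    refine (halg n).union_mem ((halg n).inter_mem hBm (hmono (by omega) hc))
      (hmono (by omega) (hb (sdiff_subset_sdiff_left (hB (Nat.zero_le _)))))
  have hcover' : B 0 ⊆ X Even ∪ X (¬ Even ·) := by
    intro x hx
    by_contra h
    simp only [X, mem_union, mem_sep_iff, not_or, not_and, not_forall] at h
    obtain ⟨i, hi, hie⟩ := h.1 hx
    obtain ⟨j, hj, hjo⟩ := h.2 hx
    have hij : i ≠ j := by rintro rfl; exact hjo hie
    exact Set.disjoint_left.mp (hB.pairwise_disjoint_sdiff_succ hij) hi hj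
  refine hR (((key _ fun K => ⟨2 * K + 1, by omega, by simp⟩).union halg hmono
    (key _ fun K => ⟨2 * K, by omega, by simp⟩)).mono hcover')

theorem IsSetAlgebra.exists_eq_univ_of_monotone : ∃ N, ℬ N = univ := by
  by_contra hN
  have huniv : ¬ IsCaptured ℬ (univ : Set α) := fun ⟨k, hk⟩ =>
    hN ⟨k, univ_subset_iff.mp (powerset_univ ▸ hk)⟩
  by_cases hsplit : ∀ W, ¬ IsCaptured ℬ W → ∃ X ⊆ W, ¬ IsCaptured ℬ X ∧ ¬ IsCaptured ℬ (W \ X)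
  · exact not_exists_pairwise_disjoint_not_isCaptured halg hmono hcover
      (exists_pairwise_disjoint_not_isCaptured huniv hsplit)
  · push Not at hsplit
    exact not_exists_not_isCaptured_atom halg hmono hcover hsplit

end SetAlgebraChain

section Approximation

variable {G : Type*} [Group G] (A : NonUnitalSubalgebra ℂ (G → ℂ)) (T : Set G)

def ApproxInterpolable (W : Set G) (δ : ℝ) (g : G → ℂ) : Prop :=
  ∃ φ ∈ A, ∀ t ∈ T, ∀ u ∈ W, ‖φ (u * t) - g t‖ ≤ δ

def approxSubmodule (W : Set G) : Submodule ℂ (G → ℂ) where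
  carrier := {g | ∀ δ > 0, ApproxInterpolable A T W δ g}
  zero_mem' δ hδ := ⟨0, zero_mem A, fun _ _ _ _ => by simpa using hδ.le⟩
  add_mem' {f g} hf hg δ hδ := by
    obtain ⟨φ, hφ, hφf⟩ := hf (δ / 2) (half_pos hδ)
    obtain ⟨ψ, hψ, hψg⟩ := hg (δ / 2) (half_pos hδ)
    refine ⟨φ + ψ, add_mem hφ hψ, fun t ht u hu => ?_⟩
    calc ‖(φ + ψ) (u * t) - (f + g) t‖ = ‖(φ (u * t) - f t) + (ψ (u * t) - g t)‖ := by
          simp only [Pi.add_apply]; ring_nf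
      _ ≤ δ / 2 + δ / 2 := (norm_add_le _ _).trans (add_le_add (hφf t ht u hu) (hψg t ht u hu))
      _ = δ := add_halves δ
  smul_mem' c g hg δ hδ := by
    obtain ⟨φ, hφ, hφg⟩ := hg (δ / (‖c‖ + 1)) (by positivity)
    refine ⟨c • φ, SMulMemClass.smul_mem c hφ, fun t ht u hu => ?_⟩
    calc ‖(c • φ) (u * t) - (c • g) t‖ = ‖c‖ * ‖φ (u * t) - g t‖ := by
          simp only [Pi.smul_apply, smul_eq_mul, ← mul_sub, norm_mul]
      _ ≤ (‖c‖ + 1) * (δ / (‖c‖ + 1)) := by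
          gcongr
          · linarith
          · exact hφg t ht u hu
      _ = δ := by field_simp

variable {A T} {W : Set G}

theorem ApproxInterpolable.mono {W' : Set G} {δ δ' : ℝ} {g : G → ℂ} (hW : W' ⊆ W) (hδ : δ ≤ δ')
    (h : ApproxInterpolable A T W δ g) : ApproxInterpolable A T W' δ' g :=
  let ⟨φ, hφ, hφg⟩ := h
  ⟨φ, hφ, fun t ht u hu => (hφg t ht u (hW hu)).trans hδ⟩

theorem approxSubmodule_antitone {W' : Set G} (hW : W' ⊆ W) :
    approxSubmodule A T W ≤ approxSubmodule A T W' :=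
  fun _ hg δ hδ => (hg δ hδ).mono hW le_rfl

theorem norm_smoothstep_sub_le {z b : ℂ} (hb : b = 0 ∨ b = 1) (hz : ‖z - b‖ ≤ 1 / 2) :
    ‖3 * z ^ 2 - 2 * z ^ 3 - b‖ ≤ 4 * ‖z - b‖ ^ 2 := by
  obtain ⟨c, hc, hfac⟩ : ∃ c : ℂ, ‖c‖ ≤ 4 ∧ 3 * z ^ 2 - 2 * z ^ 3 - b = (z - b) ^ 2 * c := by
    have h3 (w : ℂ) (hw : ‖w‖ ≤ 1 / 2) : ‖3 + 2 * w‖ ≤ 4 := by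
      calc ‖3 + 2 * w‖ ≤ ‖(3 : ℂ)‖ + ‖2 * w‖ := norm_add_le _ _
        _ ≤ 4 := by rw [norm_mul]; norm_num; linarith
    rcases hb with rfl | rfl
    · exact ⟨3 + 2 * -(z - 0), h3 _ (by rwa [norm_neg]), by ring⟩
    · exact ⟨-(3 + 2 * (z - 1)), by rw [norm_neg]; exact h3 _ hz, by ring⟩
  rw [hfac, norm_mul, norm_pow, mul_comm]
  gcongr

theorem ApproxInterpolable.smoothstep {δ : ℝ} {g : G → ℂ} (hg : ∀ t ∈ T, g t = 0 ∨ g t = 1)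
    (hδ : δ ≤ 1 / 2) (h : ApproxInterpolable A T W δ g) :
    ApproxInterpolable A T W (4 * δ ^ 2) g := by
  obtain ⟨φ, hφ, hφg⟩ := h
  refine ⟨(3 : ℂ) • (φ * φ) - (2 : ℂ) • (φ * φ * φ),
    sub_mem (SMulMemClass.smul_mem _ (mul_mem hφ hφ))
      (SMulMemClass.smul_mem _ (mul_mem (mul_mem hφ hφ) hφ)), fun t ht u hu => ?_⟩
  calc _ = ‖3 * φ (u * t) ^ 2 - 2 * φ (u * t) ^ 3 - g t‖ := by
        simp only [Pi.sub_apply, Pi.smul_apply, Pi.mul_apply, smul_eq_mul]; ring_nf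
    _ ≤ 4 * ‖φ (u * t) - g t‖ ^ 2 :=
        norm_smoothstep_sub_le (hg t ht) ((hφg t ht u hu).trans hδ)
    _ ≤ 4 * δ ^ 2 := by gcongr; exact hφg t ht u hu

theorem mem_approxSubmodule_of_approxInterpolable {g : G → ℂ}
    (hg : ∀ t ∈ T, g t = 0 ∨ g t = 1) (h : ApproxInterpolable A T W (1 / 8) g) :
    g ∈ approxSubmodule A T W := by
  have hboost (k : ℕ) : ApproxInterpolable A T W (1 / 8 * (1 / 2) ^ k) g := by
    induction k with
    | zero => simpa using h
    | succ k ih =>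
      have h0 : (0 : ℝ) ≤ (1 / 2) ^ k := by positivity
      have h1 : (1 / 2 : ℝ) ^ k ≤ 1 := pow_le_one₀ (by norm_num) (by norm_num)
      refine (ih.smoothstep hg (by nlinarith)).mono subset_rfl ?_
      rw [pow_succ (1 / 2 : ℝ) k]
      nlinarith [mul_le_mul_of_nonneg_left h1 h0]
  intro δ hδ
  obtain ⟨k, hk⟩ := exists_pow_lt_of_lt_one hδ (by norm_num : (1 / 2 : ℝ) < 1)
  exact (hboost k).mono subset_rfl (by nlinarith [pow_pos (by norm_num : (0 : ℝ) < 1 / 2) k])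

theorem mul_mem_approxSubmodule {a b : G → ℂ} (ha : a ∈ approxSubmodule A T W)
    (hb : b ∈ approxSubmodule A T W) (ha1 : ∀ t ∈ T, ‖a t‖ ≤ 1) (hb1 : ∀ t ∈ T, ‖b t‖ ≤ 1) :
    a * b ∈ approxSubmodule A T W := by
  intro δ hδ
  set η := min 1 (δ / 3)
  have hη1 : η ≤ 1 := min_le_left _ _
  have hηδ : η ≤ δ / 3 := min_le_right _ _
  obtain ⟨φ, hφ, hφa⟩ := ha η (by positivity)
  obtain ⟨ψ, hψ, hψb⟩ := hb η (by positivity)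
  refine ⟨φ * ψ, mul_mem hφ hψ, fun t ht u hu => ?_⟩
  have hφ2 : ‖φ (u * t)‖ ≤ 2 := by
    calc ‖φ (u * t)‖ ≤ ‖φ (u * t) - a t‖ + ‖a t‖ := norm_le_norm_sub_add _ _
      _ ≤ 1 + 1 := add_le_add ((hφa t ht u hu).trans hη1) (ha1 t ht)
      _ = 2 := by norm_num
  calc ‖(φ * ψ) (u * t) - (a * b) t‖
        = ‖φ (u * t) * (ψ (u * t) - b t) + (φ (u * t) - a t) * b t‖ := by
          simp only [Pi.mul_apply]; ring_nf
    _ ≤ 2 * η + η * 1 := by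
          refine (norm_add_le _ _).trans (add_le_add ?_ ?_) <;> rw [norm_mul]
          · exact mul_le_mul hφ2 (hψb t ht u hu) (norm_nonneg _) zero_le_two
          · exact mul_le_mul (hφa t ht u hu) (hb1 t ht) (norm_nonneg _) (by positivity)
    _ ≤ δ := by linarith

theorem isSetAlgebra_setOf_indicator_mem (hone : (1 : G → ℂ) ∈ approxSubmodule A T W) :
    IsSetAlgebra {S : Set G | S.indicator 1 ∈ approxSubmodule A T W} := by
  have hnorm (S : Set G) (t : G) : ‖S.indicator (1 : G → ℂ) t‖ ≤ 1 := by
    by_cases ht : t ∈ S <;> simp [ht]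
  have hcompl {S : Set G} (hS : S.indicator 1 ∈ approxSubmodule A T W) :
      Sᶜ.indicator 1 ∈ approxSubmodule A T W := by
    rw [indicator_compl]
    exact sub_mem hone hS
  refine ⟨?_, fun S hS => hcompl hS, fun S S' hS hS' => ?_⟩
  · show (∅ : Set G).indicator (1 : G → ℂ) ∈ approxSubmodule A T W
    rw [indicator_empty]
    exact zero_mem _
  rw [← compl_compl (S ∪ S'), compl_union]
  refine hcompl ?_
  rw [Set.inter_indicator_one]
  exact mul_mem_approxSubmodule (hcompl hS) (hcompl hS') (fun t _ => hnorm _ t)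
    (fun t _ => hnorm _ t)

theorem mem_approxSubmodule_of_forall_approx {g : G → ℂ}
    (h : ∀ ε > 0, ∃ g' ∈ approxSubmodule A T W, ∀ t ∈ T, ‖g t - g' t‖ ≤ ε) :
    g ∈ approxSubmodule A T W := by
  intro δ hδ
  obtain ⟨g', hg', hgg'⟩ := h (δ / 2) (half_pos hδ)
  obtain ⟨φ, hφ, hφg'⟩ := hg' (δ / 2) (half_pos hδ)
  refine ⟨φ, hφ, fun t ht u hu => ?_⟩
  calc ‖φ (u * t) - g t‖ ≤ ‖φ (u * t) - g' t‖ + ‖g' t - g t‖ :=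
        norm_sub_le_norm_sub_add_norm_sub _ _ _
    _ ≤ δ / 2 + δ / 2 := add_le_add (hφg' t ht u hu) (by rw [norm_sub_rev]; exact hgg' t ht)
    _ = δ := add_halves δ

theorem mem_approxSubmodule_of_mem_finset
    (hind : ∀ S : Set G, S.indicator 1 ∈ approxSubmodule A T W) {r : G → ℂ} (F : Finset ℂ)
    (hr : ∀ t ∈ T, r t ∈ F) : r ∈ approxSubmodule A T W := by
  refine mem_approxSubmodule_of_forall_approx fun ε hε =>
    ⟨∑ w ∈ F, w • (r ⁻¹' {w}).indicator 1, sum_mem fun w _ => Submodule.smul_mem _ w (hind _),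
      fun t ht => ?_⟩
  have hsum : ∑ w ∈ F, w * (r ⁻¹' {w}).indicator 1 t = r t := by
    rw [Finset.sum_eq_single_of_mem (r t) (hr t ht) fun w _ hw => by simp [Ne.symm hw]]
    simp
  simpa [Finset.sum_apply, hsum] using hε.le

theorem mem_approxSubmodule_of_bounded
    (hind : ∀ S : Set G, S.indicator 1 ∈ approxSubmodule A T W) {g : G → ℂ}
    (hg : ∃ M, ∀ t ∈ T, ‖g t‖ ≤ M) : g ∈ approxSubmodule A T W := by
  obtain ⟨M, hM⟩ := hg
  refine mem_approxSubmodule_of_forall_approx fun ε hε => ?_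
  obtain ⟨F, -, hF, hnet⟩ := Metric.finite_approx_of_totallyBounded
    (isCompact_closedBall (0 : ℂ) M).totallyBounded ε hε
  have hround (t : G) : ∃ w, t ∈ T → w ∈ F ∧ ‖g t - w‖ ≤ ε := by
    by_cases ht : t ∈ T
    · obtain ⟨w, hw, hgw⟩ := mem_iUnion₂.mp (hnet (mem_closedBall_zero_iff.mpr (hM t ht)))
      exact ⟨w, fun _ => ⟨hw, (mem_ball_iff_norm.mp hgw).le⟩⟩
    · exact ⟨0, fun h => absurd h ht⟩
  choose r hr using hround
  exact ⟨r, mem_approxSubmodule_of_mem_finset hind hF.toFinset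
    (fun t ht => hF.mem_toFinset.mpr (hr t ht).1), fun t ht => (hr t ht).2⟩

theorem exists_nhds_mem_approxSubmodule [TopologicalSpace G]
    (hLUC : ∀ f ∈ A, ∀ ε > (0 : ℝ), ∃ U ∈ 𝓝 (1 : G), ∀ s t : G, s * t⁻¹ ∈ U → ‖f s - f t‖ < ε)
    (hinterp : ∀ g : G → ℂ, (∃ M : ℝ, ∀ t ∈ T, ‖g t‖ ≤ M) → ∃ f ∈ A, ∀ t ∈ T, f t = g t)
    {g : G → ℂ} (hg : ∀ t ∈ T, g t = 0 ∨ g t = 1) : ∃ U ∈ 𝓝 (1 : G), g ∈ approxSubmodule A T U := by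
  obtain ⟨φ, hφ, hφg⟩ := hinterp g ⟨1, fun t ht => by rcases hg t ht with h | h <;> simp [h]⟩
  obtain ⟨U, hU, hφU⟩ := hLUC φ hφ (1 / 8) (by norm_num)
  refine ⟨U, hU, mem_approxSubmodule_of_approxInterpolable hg ⟨φ, hφ, fun t ht u hu => ?_⟩⟩
  rw [← hφg t ht]
  exact (hφU (u * t) t (by rwa [mul_inv_cancel_right])).le

theorem exists_nhds_forall_indicator_mem [TopologicalSpace G] [(𝓝 (1 : G)).IsCountablyGenerated]
    (hLUC : ∀ f ∈ A, ∀ ε > (0 : ℝ), ∃ U ∈ 𝓝 (1 : G), ∀ s t : G, s * t⁻¹ ∈ U → ‖f s - f t‖ < ε)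
    (hinterp : ∀ g : G → ℂ, (∃ M : ℝ, ∀ t ∈ T, ‖g t‖ ≤ M) → ∃ f ∈ A, ∀ t ∈ T, f t = g t) :
    ∃ W ∈ 𝓝 (1 : G), ∀ S : Set G, S.indicator 1 ∈ approxSubmodule A T W := by
  have hind (S : Set G) : ∀ t ∈ T, S.indicator (1 : G → ℂ) t = 0 ∨ S.indicator (1 : G → ℂ) t = 1 :=
    fun t _ => S.indicator_eq_zero_or_self 1 t
  obtain ⟨V, hV⟩ := (𝓝 (1 : G)).exists_antitone_basis
  obtain ⟨U, hU, hone⟩ := exists_nhds_mem_approxSubmodule hLUC hinterp (hind univ)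
  rw [indicator_univ] at hone
  let ℬ (n : ℕ) : Set (Set G) := {S | S.indicator 1 ∈ approxSubmodule A T (V n ∩ U)}
  have halg (n : ℕ) : IsSetAlgebra (ℬ n) :=
    isSetAlgebra_setOf_indicator_mem (approxSubmodule_antitone inter_subset_right hone)
  have hmono : Monotone ℬ := fun m n hmn _ hS =>
    approxSubmodule_antitone (inter_subset_inter_left U (hV.antitone hmn)) hS
  have hcover (S : Set G) : ∃ n, S ∈ ℬ n := by
    obtain ⟨US, hUS, hS⟩ := exists_nhds_mem_approxSubmodule hLUC hinterp (hind S)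
    obtain ⟨n, -, hn⟩ := hV.toHasBasis.mem_iff.mp hUS
    exact ⟨n, approxSubmodule_antitone (inter_subset_left.trans hn) hS⟩
  obtain ⟨N, hN⟩ := IsSetAlgebra.exists_eq_univ_of_monotone halg hmono hcover
  exact ⟨V N ∩ U, inter_mem (hV.mem N) hU, fun S => show S ∈ ℬ N from hN ▸ mem_univ S⟩

end Approximation

theorem approximate_interpolation_general
    {G : Type*} [TopologicalSpace G] [Group G]
    [TopologicalSpace.MetrizableSpace G]
    (A : Set (G → ℂ))
    -- `𝒜` consists of bounded continuous functions which are right uniformly continuous: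
    (hLUC : ∀ f ∈ A, ∀ ε > (0 : ℝ), ∃ U ∈ nhds (1 : G),
      ∀ s t : G, s * t⁻¹ ∈ U → ‖f s - f t‖ < ε)
    -- `𝒜` is a C*-subalgebra (closed under the algebra operations and uniform limits):
    (hadd : ∀ f ∈ A, ∀ g ∈ A, f + g ∈ A) (hmul : ∀ f ∈ A, ∀ g ∈ A, f * g ∈ A)
    (hsmul : ∀ c : ℂ, ∀ f ∈ A, c • f ∈ A)
    -- `T` is an `𝒜`-interpolation set:
    (T : Set G)
    (hinterp : ∀ g : G → ℂ, (∃ M : ℝ, ∀ t ∈ T, ‖g t‖ ≤ M) → ∃ f ∈ A, ∀ t ∈ T, f t = g t) :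
    ∀ ε > (0 : ℝ), ∃ V ∈ nhds (1 : G), ∀ f : G → ℂ, (∀ t ∈ T, ‖f t‖ = 1) →
      ∃ φ ∈ A, ∀ t ∈ T, ∀ u ∈ V, ‖φ (u * t) - f t‖ < ε := by
  intro ε hε
  obtain ⟨f₀, hf₀, -⟩ := hinterp 0 ⟨0, by simp⟩
  let 𝒜 : NonUnitalSubalgebra ℂ (G → ℂ) :=
    { carrier := A
      add_mem' := fun hf hg => hadd _ hf _ hg
      zero_mem' := by simpa using hsmul 0 f₀ hf₀
      mul_mem' := fun hf hg => hmul _ hf _ hg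
      smul_mem' := fun c _ hf => hsmul c _ hf }
  obtain ⟨W, hW, hind⟩ := exists_nhds_forall_indicator_mem (A := 𝒜) hLUC hinterp
  refine ⟨W, hW, fun f hf => ?_⟩
  obtain ⟨φ, hφ, hφf⟩ :=
    mem_approxSubmodule_of_bounded hind ⟨1, fun t ht => (hf t ht).le⟩ (ε / 2) (half_pos hε)
  exact ⟨φ, hφ, fun t ht u hu => (hφf t ht u hu).trans_lt (half_lt_self hε)⟩

/-- Lemma 6.5 (approximate interpolation): let `G` be a metrizable locally compact group,
`𝒜 ⊆ LUC(G)` a C*-subalgebra and `T` an `𝒜`-interpolation set. Then for every `ε > 0` there is a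
neighbourhood `V` of the identity such that every unimodular function `f` on `T` admits `φ ∈ 𝒜`
with `|φ(ut) − f(t)| < ε` for all `t ∈ T` and `u ∈ V`. -/
theorem approximate_interpolation
    {G : Type*} [TopologicalSpace G] [Group G] [IsTopologicalGroup G]
    [LocallyCompactSpace G] [TopologicalSpace.MetrizableSpace G] [T2Space G]
    (A : Set (G → ℂ))
    -- `𝒜` consists of bounded continuous functions which are right uniformly continuous:
    (hCB : ∀ f ∈ A, Continuous f ∧ ∃ M : ℝ, ∀ s : G, ‖f s‖ ≤ M)
    (hLUC : ∀ f ∈ A, ∀ ε > (0 : ℝ), ∃ U ∈ nhds (1 : G),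
      ∀ s t : G, s * t⁻¹ ∈ U → ‖f s - f t‖ < ε)
    -- `𝒜` is a C*-subalgebra (closed under the algebra operations and uniform limits):
    (hadd : ∀ f ∈ A, ∀ g ∈ A, f + g ∈ A) (hmul : ∀ f ∈ A, ∀ g ∈ A, f * g ∈ A)
    (hsmul : ∀ c : ℂ, ∀ f ∈ A, c • f ∈ A)
    (hstar : ∀ f ∈ A, (fun t => (starRingEnd ℂ) (f t)) ∈ A)
    (hclosed : ∀ (u : ℕ → G → ℂ) (f : G → ℂ), (∀ n, u n ∈ A) →
      TendstoUniformly u f Filter.atTop → Continuous f → f ∈ A)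
    -- `T` is an `𝒜`-interpolation set:
    (T : Set G)
    (hinterp : ∀ g : G → ℂ, (∃ M : ℝ, ∀ t ∈ T, ‖g t‖ ≤ M) → ∃ f ∈ A, ∀ t ∈ T, f t = g t) :
    ∀ ε > (0 : ℝ), ∃ V ∈ nhds (1 : G), ∀ f : G → ℂ, (∀ t ∈ T, ‖f t‖ = 1) →
      ∃ φ ∈ A, ∀ t ∈ T, ∀ u ∈ V, ‖φ (u * t) - f t‖ < ε :=
  approximate_interpolation_general A hLUC hadd hmul hsmul T hinterp
end
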